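/- Let T_n be the number of nilpotent elements of IS_n and L_n the total number of chains of all elements of IS_n. Then T_n = |IS_{n-1}| + L_{n-1}. -/

import Mathlib

def IsPInj (n : ℕ) (f : Fin n → Option (Fin n)) : Prop :=
  ∀ a b c, f a = some c → f b = some c → a = b

instance (n : ℕ) : DecidablePred (IsPInj n) := fun _ =>
  inferInstanceAs (Decidable (∀ _ _ _, _ → _ → _))

/-- The symmetric inverse semigroup `IS_n`: partial injective maps on `{1,…,n}`. -/
def PInj (n : ℕ) := {f : Fin n → Option (Fin n) // IsPInj n f}

instance (n : ℕ) : Fintype (PInj n) := Subtype.fintype _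

/-- `iterMap n f k x` is `f^k(x)` as a partial map. -/
def iterMap (n : ℕ) (f : Fin n → Option (Fin n)) : ℕ → Fin n → Option (Fin n)
  | 0, x => some x
  | k + 1, x => (f x).bind (iterMap n f k)

/-- Size of the domain of a partial injection. -/
def domCard (n : ℕ) (α : PInj n) : ℕ :=
  (Finset.univ.filter (fun x => α.val x ≠ none)).card

/-- `α` is nilpotent: some positive power is the empty map. -/
def Nilpotent (n : ℕ) (α : PInj n) : Prop :=
  ∃ k, 0 < k ∧ ∀ x, iterMap n α.val k x = none

/-- `|IS_m| = ∑_j binom(m,j)^2 j!`. -/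
def cardIS (m : ℕ) : ℕ := ∑ j ∈ Finset.range (m + 1), (m.choose j) ^ 2 * j.factorial

/-!
Every partial injection on `m + 1` points arises in exactly one way from a partial injection `α`
on `m` points by attaching the last point, in one of `2m + 2 - |dom α|` ways; all but
one of them enlarge the domain by one. Characterising nilpotency by a strictly decreasing rank
function shows that the extension is nilpotent iff `α` is and the new point is not made a fixed
point. Summing an arbitrary weight `w` of the domain size over both families gives two recursions,
from which the refined identity
`∑_{β ∈ IS_{n+1} nilpotent} w |dom β| = ∑_{α ∈ IS_n} (w d + (n - d) w (d + 1))`, `d = |dom α|`,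
follows by induction on `n`; the theorem is the case `w = 1`.
-/

namespace PInj

section Rank

variable {n : ℕ}

def IsRank (f : Fin n → Option (Fin n)) (r : Fin n → ℕ) : Prop :=
  ∀ x y, f x = some y → r y < r x

lemma iterMap_succ_of_eq_some {f : Fin n → Option (Fin n)} {x y : Fin n} (h : f x = some y)
    (k : ℕ) : iterMap n f (k + 1) x = iterMap n f k y := by
  rw [iterMap, h, Option.bind_some]

lemma IsRank.add_le_of_iterMap_eq_some {f : Fin n → Option (Fin n)} {r : Fin n → ℕ}
    (hr : IsRank f r) {k : ℕ} {x y : Fin n} (h : iterMap n f k x = some y) : r y + k ≤ r x := by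
  induction k generalizing x with
  | zero => cases h; rfl
  | succ k ih =>
    cases hx : f x with
    | none => simp [iterMap, hx] at h
    | some z =>
      rw [iterMap_succ_of_eq_some hx] at h
      have := hr x z hx
      have := ih h
      omega

/-- For a nilpotent map the rank of `x` is the first `k` with `f^k x` undefined; conversely a rank
bounds the length of every path. -/
theorem nilpotent_iff_exists_isRank (α : PInj n) : Nilpotent n α ↔ ∃ r, IsRank α.val r := by
  classical
  constructor
  · rintro ⟨K, -, hK⟩
    have hex : ∀ x, ∃ k, iterMap n α.val k x = none := fun x => ⟨K, hK x⟩
    refine ⟨fun x => Nat.find (hex x), fun x y hxy => ?_⟩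
    obtain ⟨j, hj⟩ : ∃ j, Nat.find (hex x) = j + 1 :=
      Nat.exists_eq_succ_of_ne_zero fun h0 => by simpa [h0, iterMap] using Nat.find_spec (hex x)
    have hspec := Nat.find_spec (hex x)
    rw [hj, iterMap_succ_of_eq_some hxy] at hspec
    simpa only [hj, Nat.lt_succ_iff] using Nat.find_min' (hex y) hspec
  · rintro ⟨r, hr⟩
    refine ⟨Finset.univ.sup r + 1, Nat.succ_pos _, fun x => ?_⟩
    by_contra hx
    obtain ⟨y, hy⟩ := Option.ne_none_iff_exists'.mp hx
    have := hr.add_le_of_iterMap_eq_some hy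
    have := Finset.le_sup (f := r) (Finset.mem_univ x)
    omega

end Rank

variable {m : ℕ}

section Extension

abbrev NotInRange (α : PInj m) : Type :=
  {v : Fin m // v ∉ Finset.univ.filterMap α.val α.2}

/-- The ways to add the new point `last m` to `α`: `none` leaves it isolated, `some none` makes it
a fixed point, `some (some (inl x))` inserts it on the arrow leaving `x`, and
`some (some (inr v))` sends it to a point `v` outside the range of `α`. -/
abbrev Extension (α : PInj m) : Type :=
  Option (Option (Fin m ⊕ NotInRange α))

variable {α : PInj m}

def Extension.incoming : Extension α → Option (Fin m)
  | some (some (Sum.inl x)) => some x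
  | _ => none

def Extension.outgoing : Extension α → Option (Fin (m + 1))
  | none => none
  | some none => some (Fin.last m)
  | some (some (Sum.inl x)) => (α.val x).map Fin.castSucc
  | some (some (Sum.inr v)) => some v.1.castSucc

lemma Extension.ext_incoming_outgoing {d d' : Extension α} (hi : d.incoming = d'.incoming)
    (ho : d.outgoing = d'.outgoing) : d = d' := by
  rcases d with _ | _ | x | v <;> rcases d' with _ | _ | x' | v' <;>
    simp_all [incoming, outgoing, (Fin.castSucc_ne_last _).symm, Subtype.ext_iff]

def extendFun (α : PInj m) (d : Extension α) : Fin (m + 1) → Option (Fin (m + 1)) :=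
  Fin.lastCases d.outgoing fun x =>
    if d.incoming = some x then some (Fin.last m) else (α.val x).map Fin.castSucc

@[simp]
lemma extendFun_last (d : Extension α) : extendFun α d (Fin.last m) = d.outgoing :=
  Fin.lastCases_last

@[simp]
lemma extendFun_castSucc (d : Extension α) (x : Fin m) :
    extendFun α d x.castSucc =
      if d.incoming = some x then some (Fin.last m) else (α.val x).map Fin.castSucc :=
  Fin.lastCases_castSucc x

lemma extendFun_castSucc_eq_last_iff (d : Extension α) (x : Fin m) :
    extendFun α d x.castSucc = some (Fin.last m) ↔ d.incoming = some x := by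
  by_cases h : d.incoming = some x <;> simp [h, Fin.castSucc_ne_last]

lemma extendFun_castSucc_eq_castSucc_iff (d : Extension α) (x y : Fin m) :
    extendFun α d x.castSucc = some y.castSucc ↔
      d.incoming ≠ some x ∧ α.val x = some y := by
  by_cases h : d.incoming = some x <;> simp [h, (Fin.castSucc_ne_last _).symm]

lemma extendFun_castSucc_ne_outgoing (d : Extension α) (x : Fin m) {c : Fin (m + 1)}
    (hc : d.outgoing = some c) : extendFun α d x.castSucc ≠ some c := by
  intro hx
  induction c using Fin.lastCases with
  | last =>
    rw [extendFun_castSucc_eq_last_iff] at hx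
    rcases d with _ | _ | x' | v <;> simp_all [Extension.incoming, Extension.outgoing]
  | cast y =>
    obtain ⟨hinc, hxy⟩ := (extendFun_castSucc_eq_castSucc_iff d x y).mp hx
    rcases d with _ | _ | x' | ⟨v, hv⟩ <;>
      simp [Extension.incoming, Extension.outgoing, (Fin.castSucc_ne_last _).symm] at hinc hc
    · exact hinc (α.2 x' x y hc hxy)
    · exact hv (Finset.mem_filterMap _ |>.mpr ⟨x, Finset.mem_univ _, hc ▸ hxy⟩)

lemma isPInj_extendFun (d : Extension α) : IsPInj (m + 1) (extendFun α d) := by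
  intro a b c ha hb
  induction a using Fin.lastCases with
  | last =>
    induction b using Fin.lastCases with
    | last => rfl
    | cast y => exact absurd hb (extendFun_castSucc_ne_outgoing d y (by simpa using ha))
  | cast x =>
    induction b using Fin.lastCases with
    | last => exact absurd ha (extendFun_castSucc_ne_outgoing d x (by simpa using hb))
    | cast y =>
      induction c using Fin.lastCases with
      | last =>
        rw [extendFun_castSucc_eq_last_iff] at ha hb
        rw [Option.some_injective _ (ha.symm.trans hb)]
      | cast c =>
        rw [extendFun_castSucc_eq_castSucc_iff] at ha hb
        rw [α.2 x y c ha.2 hb.2]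

def extend (α : PInj m) (d : Extension α) : PInj (m + 1) :=
  ⟨extendFun α d, isPInj_extendFun d⟩

@[simp]
lemma val_extend (α : PInj m) (d : Extension α) : (extend α d).val = extendFun α d := rfl

end Extension

section Contraction

def forgetLast : Fin (m + 1) → Option (Fin m) :=
  Fin.lastCases none some

/-- Removes the point `last m`, joining an arrow `x ↦ last m` to the arrow leaving `last m`. -/
def contractFun (b : Fin (m + 1) → Option (Fin (m + 1))) (x : Fin m) : Option (Fin m) :=
  (b x.castSucc).bind (Fin.lastCases ((b (Fin.last m)).bind forgetLast) some)

lemma contractFun_eq_some_iff (b : Fin (m + 1) → Option (Fin (m + 1))) (x z : Fin m) :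
    contractFun b x = some z ↔ b x.castSucc = some z.castSucc ∨
      (b x.castSucc = some (Fin.last m) ∧ b (Fin.last m) = some z.castSucc) := by
  unfold contractFun
  cases hb : b x.castSucc with
  | none => simp
  | some w =>
    induction w using Fin.lastCases with
    | last =>
      cases b (Fin.last m) with
      | none => simp [(Fin.castSucc_ne_last _).symm]
      | some w' =>
        induction w' using Fin.lastCases <;>
          simp [forgetLast, (Fin.castSucc_ne_last _).symm]
    | cast w => simp

lemma map_castSucc_bind_forgetLast {o : Option (Fin (m + 1))} (h : o ≠ some (Fin.last m)) :
    (o.bind forgetLast).map Fin.castSucc = o := by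
  rcases o with _ | w
  · rfl
  · induction w using Fin.lastCases with
    | last => exact absurd rfl h
    | cast w => simp [forgetLast]

lemma map_castSucc_contractFun {b : Fin (m + 1) → Option (Fin (m + 1))} {x : Fin m}
    (h : b x.castSucc ≠ some (Fin.last m)) :
    (contractFun b x).map Fin.castSucc = b x.castSucc := by
  have := map_castSucc_bind_forgetLast h
  rcases hb : b x.castSucc with _ | w
  · simp [contractFun, hb]
  · induction w using Fin.lastCases with
    | last => exact absurd hb h
    | cast w => simp [contractFun, hb]

lemma bind_lastCases_map_castSucc (o : Option (Fin m)) (a : Option (Fin m)) :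
    (o.map Fin.castSucc).bind (Fin.lastCases a some) = o := by
  cases o <;> simp

lemma isPInj_contractFun (β : PInj (m + 1)) : IsPInj m (contractFun β.val) := by
  intro x y c hx hy
  rw [contractFun_eq_some_iff] at hx hy
  have hβ := β.2
  rcases hx with hx | ⟨hx, hxl⟩ <;> rcases hy with hy | ⟨hy, hyl⟩
  · exact Fin.castSucc_injective m (hβ _ _ _ hx hy)
  · exact absurd (hβ _ _ _ hx hyl) (Fin.castSucc_ne_last x)
  · exact absurd (hβ _ _ _ hy hxl) (Fin.castSucc_ne_last y)
  · exact Fin.castSucc_injective m (hβ _ _ _ hx hy)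

def contract (β : PInj (m + 1)) : PInj m :=
  ⟨contractFun β.val, isPInj_contractFun β⟩

lemma Extension.eq_inl_of_incoming {α : PInj m} {d : Extension α} {x : Fin m}
    (h : d.incoming = some x) : d = some (some (Sum.inl x)) := by
  rcases d with _ | _ | x' | v <;> simp_all [incoming]

@[simp]
lemma contract_extend (α : PInj m) (d : Extension α) : contract (extend α d) = α := by
  refine Subtype.ext (funext fun x => ?_)
  change contractFun (extendFun α d) x = α.val x
  by_cases h : d.incoming = some x
  · obtain rfl := Extension.eq_inl_of_incoming h
    cases hx : α.val x <;> simp [contractFun, Extension.incoming, Extension.outgoing, hx,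
      forgetLast]
  · simp only [contractFun, extendFun_castSucc, if_neg h]
    exact bind_lastCases_map_castSucc _ _

lemma extend_injective :
    Function.Injective fun s : Σ α : PInj m, Extension α => extend s.1 s.2 := by
  rintro ⟨α, d⟩ ⟨α', d'⟩ h
  obtain rfl : α = α' := by simpa using congrArg contract h
  have hfun : extendFun α d = extendFun α d' := congrArg Subtype.val h
  congr 1
  refine Extension.ext_incoming_outgoing (Option.ext fun x => ?_) ?_
  · rw [← extendFun_castSucc_eq_last_iff, ← extendFun_castSucc_eq_last_iff, hfun]
  · rw [← extendFun_last, ← extendFun_last, hfun]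

lemma extend_contract_eq {β : PInj (m + 1)} {d : Extension (contract β)}
    (hinc : ∀ x, d.incoming = some x ↔ β.val x.castSucc = some (Fin.last m))
    (hout : d.outgoing = β.val (Fin.last m)) : extend (contract β) d = β := by
  refine Subtype.ext (funext fun y => ?_)
  change extendFun _ d y = β.val y
  induction y using Fin.lastCases with
  | last => rw [extendFun_last, hout]
  | cast x =>
    by_cases h : β.val x.castSucc = some (Fin.last m)
    · rw [h, extendFun_castSucc_eq_last_iff, hinc, h]
    · rw [extendFun_castSucc, if_neg (by rwa [hinc])]
      exact map_castSucc_contractFun h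

lemma extend_surjective :
    Function.Surjective fun s : Σ α : PInj m, Extension α => extend s.1 s.2 := by
  intro β
  have hβ := β.2
  by_cases hx₀ : ∃ x₀ : Fin m, β.val x₀.castSucc = some (Fin.last m)
  · obtain ⟨x₀, hx₀⟩ := hx₀
    refine ⟨⟨contract β, some (some (Sum.inl x₀))⟩, extend_contract_eq (fun x => ?_) ?_⟩
    · refine ⟨fun h => ?_, fun h => ?_⟩
      · cases h; exact hx₀
      · simp [Extension.incoming, Fin.castSucc_injective m (hβ _ _ _ hx₀ h)]
    · have hlast : β.val (Fin.last m) ≠ some (Fin.last m) := fun h =>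
        Fin.castSucc_ne_last x₀ (hβ _ _ _ hx₀ h)
      simpa [Extension.outgoing, contract, contractFun, hx₀] using
        map_castSucc_bind_forgetLast hlast
  · push Not at hx₀
    have hinc {d : Extension (contract β)} (hd : d.incoming = none) (x : Fin m) :
        d.incoming = some x ↔ β.val x.castSucc = some (Fin.last m) := by
      simp [hd, hx₀ x]
    rcases hL : β.val (Fin.last m) with _ | w
    · exact ⟨⟨contract β, none⟩, extend_contract_eq (hinc rfl) hL.symm⟩
    · induction w using Fin.lastCases with
      | last => exact ⟨⟨contract β, some none⟩, extend_contract_eq (hinc rfl) hL.symm⟩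
      | cast v =>
        have hv : v ∉ Finset.univ.filterMap (contract β).val (contract β).2 := by
          intro hmem
          obtain ⟨x, -, hx⟩ := (Finset.mem_filterMap _).mp hmem
          rcases (contractFun_eq_some_iff _ _ _).mp hx with hx | ⟨hx, -⟩
          · exact Fin.castSucc_ne_last x (hβ _ _ _ hx hL)
          · exact hx₀ x hx
        exact ⟨⟨contract β, some (some (Sum.inr ⟨v, hv⟩))⟩,
          extend_contract_eq (hinc rfl) hL.symm⟩

noncomputable def extendEquiv : (Σ α : PInj m, Extension α) ≃ PInj (m + 1) :=
  Equiv.ofBijective _ ⟨extend_injective, extend_surjective⟩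

end Contraction

section DomCard

lemma domCard_le (α : PInj m) : domCard m α ≤ m :=
  (Finset.card_filter_le _ _).trans_eq (Finset.card_fin m)

lemma card_filterMap_univ (α : PInj m) :
    (Finset.univ.filterMap α.val α.2).card = domCard m α := by
  symm
  refine Finset.card_bij (fun x hx => (α.val x).get
    (Option.isSome_iff_ne_none.mpr (Finset.mem_filter.mp hx).2)) (fun x _ => ?_)
    (fun x _ y _ hxy => α.2 x y _ (Option.some_get _).symm
      (by rw [hxy]; exact (Option.some_get _).symm))
    (fun v hv => ?_)
  · exact (Finset.mem_filterMap _).mpr ⟨x, Finset.mem_univ _, (Option.some_get _).symm⟩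
  · obtain ⟨x, -, hx⟩ := (Finset.mem_filterMap _).mp hv
    exact ⟨x, by simp [hx], by simp [hx]⟩

lemma card_notInRange (α : PInj m) : Fintype.card (NotInRange α) = m - domCard m α := by
  rw [Fintype.card_subtype_compl, Fintype.card_coe, card_filterMap_univ, Fintype.card_fin]

lemma domCard_succ (β : PInj (m + 1)) :
    domCard (m + 1) β = (Finset.univ.filter fun x : Fin m => β.val x.castSucc ≠ none).card +
      if β.val (Fin.last m) ≠ none then 1 else 0 := by
  rw [domCard, Finset.card_filter, Fin.sum_univ_castSucc, Finset.card_filter]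

lemma filter_extendFun_castSucc_ne_none (α : PInj m) (d : Extension α) :
    (Finset.univ.filter fun x : Fin m => extendFun α d x.castSucc ≠ none) =
      (Finset.univ.filter fun x => α.val x ≠ none) ∪ d.incoming.toFinset := by
  ext x
  by_cases h : d.incoming = some x <;> simp [h]

lemma domCard_extend_none (α : PInj m) : domCard (m + 1) (extend α none) = domCard m α := by
  rw [domCard_succ, val_extend, filter_extendFun_castSucc_ne_none]
  simp [Extension.incoming, Extension.outgoing, domCard]

lemma domCard_extend_some (α : PInj m) (e : Option (Fin m ⊕ NotInRange α)) :
    domCard (m + 1) (extend α (some e)) = domCard m α + 1 := by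
  rw [domCard_succ, val_extend, filter_extendFun_castSucc_ne_none]
  rcases e with _ | x | v
  · simp [Extension.incoming, Extension.outgoing, domCard]
  · by_cases hx : α.val x = none <;> simp [Extension.incoming, Extension.outgoing, domCard, hx]
  · simp [Extension.incoming, Extension.outgoing, domCard]

end DomCard

section Nilpotent

variable {α : PInj m}

/-- Rank of the new point, chosen so that old points keep rank `2 * r x + 2`. -/
def Extension.newRank (r : Fin m → ℕ) : Extension α → ℕ
  | some (some (Sum.inl x)) => 2 * r x + 1
  | some (some (Sum.inr v)) => 2 * r v.1 + 3
  | _ => 0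

lemma isRank_extendFun {r : Fin m → ℕ} (hr : IsRank α.val r) {d : Extension α}
    (hd : d ≠ some none) :
    IsRank (extendFun α d) (Fin.lastCases (d.newRank r) fun x => 2 * r x + 2) := by
  intro a b hab
  induction a using Fin.lastCases with
  | last =>
    rw [extendFun_last] at hab
    induction b using Fin.lastCases with
    | last => rcases d with _ | _ | x | v <;> simp_all [Extension.outgoing, Fin.castSucc_ne_last]
    | cast y =>
      rcases d with _ | _ | x | v
      · simp [Extension.outgoing] at hab
      · simp [Extension.outgoing, (Fin.castSucc_ne_last _).symm] at hab
      · have := hr x y (by simpa [Extension.outgoing] using hab)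
        simp only [Fin.lastCases_castSucc, Fin.lastCases_last, Extension.newRank]
        omega
      · obtain rfl : v.1 = y := by simpa [Extension.outgoing] using hab
        simp [Extension.newRank]
  | cast x =>
    induction b using Fin.lastCases with
    | last =>
      obtain rfl := Extension.eq_inl_of_incoming ((extendFun_castSucc_eq_last_iff d x).mp hab)
      simp [Extension.newRank]
    | cast y =>
      have := hr x y ((extendFun_castSucc_eq_castSucc_iff d x y).mp hab).2
      simp only [Fin.lastCases_castSucc]
      omega

lemma isRank_comp_castSucc {d : Extension α} {r : Fin (m + 1) → ℕ}
    (hr : IsRank (extendFun α d) r) : IsRank α.val (r ∘ Fin.castSucc) := by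
  intro x y hxy
  by_cases h : d.incoming = some x
  · obtain rfl := Extension.eq_inl_of_incoming h
    have h₁ := hr _ _ ((extendFun_castSucc_eq_last_iff _ x).mpr h)
    have h₂ := hr (Fin.last m) y.castSucc (by simp [Extension.outgoing, hxy])
    exact h₂.trans h₁
  · exact hr _ _ ((extendFun_castSucc_eq_castSucc_iff d x y).mpr ⟨h, hxy⟩)

theorem nilpotent_extend_iff (d : Extension α) :
    Nilpotent (m + 1) (extend α d) ↔ Nilpotent m α ∧ d ≠ some none := by
  simp only [nilpotent_iff_exists_isRank, val_extend]
  constructor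
  · rintro ⟨r, hr⟩
    refine ⟨⟨_, isRank_comp_castSucc hr⟩, ?_⟩
    rintro rfl
    exact lt_irrefl _ (hr (Fin.last m) (Fin.last m) (by simp [Extension.outgoing]))
  · rintro ⟨⟨r, hr⟩, hd⟩
    exact ⟨_, isRank_extendFun hr hd⟩

end Nilpotent

section Counting

variable {M : Type*} [AddCommMonoid M]

@[simp]
lemma extendEquiv_apply (s : Σ α : PInj m, Extension α) : extendEquiv s = extend s.1 s.2 := rfl

lemma card_extension_some (α : PInj m) :
    Fintype.card (Fin m ⊕ NotInRange α) = m + (m - domCard m α) := by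
  rw [Fintype.card_sum, Fintype.card_fin, card_notInRange]

lemma sum_extension_domCard (α : PInj m) (w : ℕ → M) :
    ∑ d : Extension α, w (domCard (m + 1) (extend α d)) =
      w (domCard m α) + (m + (m - domCard m α) + 1) • w (domCard m α + 1) := by
  simp only [Fintype.sum_option, domCard_extend_none, domCard_extend_some, Finset.sum_const,
    Finset.card_univ, Fintype.card_option, card_extension_some]

open Classical in
lemma sum_extension_nilpotent_domCard (α : PInj m) (w : ℕ → M) :
    ∑ d : Extension α,
        (if Nilpotent (m + 1) (extend α d) then w (domCard (m + 1) (extend α d)) else 0) =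
      if Nilpotent m α then w (domCard m α) + (m + (m - domCard m α)) • w (domCard m α + 1)
      else 0 := by
  by_cases hα : Nilpotent m α
  · simp only [Fintype.sum_option, nilpotent_extend_iff, hα, true_and, ne_eq, not_true_eq_false,
      Option.some.injEq, reduceCtorEq, not_false_eq_true, if_true, if_false, domCard_extend_none,
      domCard_extend_some, Finset.sum_const, Finset.card_univ, card_extension_some, zero_add]
  · simp [nilpotent_extend_iff, hα]

theorem sum_domCard_succ (w : ℕ → M) :
    ∑ β : PInj (m + 1), w (domCard (m + 1) β) =
      ∑ α : PInj m,
        (w (domCard m α) + (m + (m - domCard m α) + 1) • w (domCard m α + 1)) := by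
  simp only [← extendEquiv.sum_comp, Fintype.sum_sigma, extendEquiv_apply, sum_extension_domCard]

open Classical in
theorem sum_nilpotent_domCard_succ (w : ℕ → M) :
    ∑ β ∈ Finset.univ.filter (Nilpotent (m + 1)), w (domCard (m + 1) β) =
      ∑ α ∈ Finset.univ.filter (Nilpotent m),
        (w (domCard m α) + (m + (m - domCard m α)) • w (domCard m α + 1)) := by
  simp only [Finset.sum_filter, ← extendEquiv.sum_comp, Fintype.sum_sigma, extendEquiv_apply]
  exact Finset.sum_congr rfl fun α _ => sum_extension_nilpotent_domCard α w

lemma nilpotent_zero (α : PInj 0) : Nilpotent 0 α :=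
  ⟨1, one_pos, fun x => x.elim0⟩

open Classical in
theorem sum_nilpotent_domCard_eq (n : ℕ) (w : ℕ → M) :
    ∑ β ∈ Finset.univ.filter (Nilpotent (n + 1)), w (domCard (n + 1) β) =
      ∑ α : PInj n, (w (domCard n α) + (n - domCard n α) • w (domCard n α + 1)) := by
  induction n generalizing w with
  | zero =>
    rw [sum_nilpotent_domCard_succ, Finset.filter_true_of_mem fun α _ => nilpotent_zero α]
    simp
  | succ n ih =>
    rw [sum_nilpotent_domCard_succ, ih fun j => w j + (n + 1 + (n + 1 - j)) • w (j + 1),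
      sum_domCard_succ fun j => w j + (n + 1 - j) • w (j + 1)]
    refine Finset.sum_congr rfl fun α _ => ?_
    obtain ⟨t, ht⟩ := Nat.exists_eq_add_of_le (domCard_le α)
    have h₁ : n + 1 - domCard n α = t + 1 := by omega
    have h₂ : n + 1 - (domCard n α + 1) = t := by omega
    have h₃ : n - domCard n α = t := by omega
    simp only [h₁, h₂, h₃]
    module

end Counting

end PInj

open PInj in
theorem stmt17 (n : ℕ) (h : 0 < n) :
    Set.ncard {α : PInj n | Nilpotent n α}
      = Nat.card (PInj (n - 1)) + ∑ α : PInj (n - 1), ((n - 1) - domCard (n - 1) α) := by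
  classical
  obtain ⟨m, rfl⟩ := Nat.exists_eq_succ_of_ne_zero h.ne'
  have key := sum_nilpotent_domCard_eq m fun _ => 1
  simp only [smul_eq_mul, mul_one, Finset.sum_add_distrib, ← Finset.card_eq_sum_ones,
    Finset.card_univ] at key
  rw [Set.ncard_eq_toFinset_card', Set.toFinset_ofPred, key, Nat.card_eq_fintype_card,
    Nat.succ_sub_one]
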